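/- Let T be a k-linear triangulated category with a Serre functor S, and let A ⊆ T be an admissible full triangulated subcategory. Then S maps ^⊥A onto A^⊥ and S^{−1} maps A^⊥ onto ^⊥A, i.e. the essential image of ^⊥A under S equals A^⊥ and the essential image of A^⊥ under S^{−1} equals ^⊥A. In particular, if T = ⟨A, B⟩ is a semiorthogonal decomposition, then B = ^⊥A, A = B^⊥, and there are semiorthogonal decompositions T = ⟨S(B), A⟩ and T = ⟨B, S^{−1}(A)⟩, where S(B) and S^{−1}(A) denote essential images. -/

import Mathlib

/-
Serre duality `Hom(X, a) ≅ Hom(a, S X)^*` shows that `X ∈ ^⊥A` iff `S X ∈ A^⊥`, which gives the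
first two claims. In a decomposition `T = ⟨A, B⟩` the decomposition triangles `b → t → a` force
`B = ^⊥A` and `A = B^⊥`. Since `i_A` has a right adjoint, the counit triangles
`i_A i_A^! t → t → z` have `z ∈ A^⊥`, so `T = ⟨A^⊥, A⟩ = ⟨S(B), A⟩`. Pulling the counit triangle
of `S t` back along the exact equivalence `S` gives a triangle `x → t → z` with `S x ∈ A` and
`S z ∈ A^⊥`, i.e. `z ∈ ^⊥A = B`, whence `T = ⟨B, S⁻¹(A)⟩`.
-/

namespace HPD

open CategoryTheory Category Limits Pretriangulated

universe w v u

variable {C : Type u} [Category.{v} C]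

/-- The "essential image" of a set of objects under an assignment `Φ` on objects. -/
def essImageSet (Φ : C → C) (S : Set C) : Set C :=
  {Y : C | ∃ X ∈ S, Nonempty (Φ X ≅ Y)}

/-- The image of a set of objects under a functor to a full subcategory, regarded as a
set of objects of the ambient category (closed under isomorphism). -/
def projImageSet {Z : C → Prop} (π : C ⥤ ObjectProperty.FullSubcategory Z) (S : Set C) : Set C :=
  essImageSet (fun X : C => (π.obj X).obj) S

section Preadd

variable [Preadditive C]

/-- `HomOrth B A` : every morphism from an object of `B` to an object of `A` vanishes. -/
def HomOrth (B A : Set C) : Prop :=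
  ∀ ⦃X : C⦄, X ∈ B → ∀ ⦃Y : C⦄, Y ∈ A → ∀ f : X ⟶ Y, f = 0

/-- The right orthogonal `A^⊥` of a set of objects `A`. -/
def rightOrth (A : Set C) : Set C :=
  {Y : C | ∀ ⦃X : C⦄, X ∈ A → ∀ f : X ⟶ Y, f = 0}

/-- The left orthogonal `^⊥A` of a set of objects `A`. -/
def leftOrth (A : Set C) : Set C :=
  {X : C | ∀ ⦃Y : C⦄, Y ∈ A → ∀ f : X ⟶ Y, f = 0}

/-- A subcategory (set of objects) is admissible if the inclusion of the corresponding
full subcategory admits both a left and a right adjoint. -/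
def IsAdmissibleSub (A : Set C) : Prop :=
  (ObjectProperty.ι (C := C) (· ∈ A)).IsRightAdjoint ∧
    (ObjectProperty.ι (C := C) (· ∈ A)).IsLeftAdjoint

/-- `L : C ⥤ C` is a left mutation functor through `B`, i.e. it is (isomorphic to)
the composition `i_{B^⊥} ∘ i_{B^⊥}^*` of the left adjoint of the inclusion of the right
orthogonal of `B` with this inclusion. -/
def IsLeftMutation (B : Set C) (L : C ⥤ C) : Prop :=
  ∃ p : C ⥤ ObjectProperty.FullSubcategory (C := C) (· ∈ rightOrth B),
    Nonempty (p ⊣ ObjectProperty.ι (C := C) (· ∈ rightOrth B)) ∧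
      Nonempty (L ≅ p ⋙ ObjectProperty.ι (C := C) (· ∈ rightOrth B))

end Preadd

section Triang

variable [HasZeroObject C] [Preadditive C] [HasShift C ℤ]
  [∀ n : ℤ, (shiftFunctor C n).Additive] [Pretriangulated C]

/-- A full triangulated subcategory, recorded as its (isomorphism-closed) set of objects. -/
structure IsTriangSub (A : Set C) : Prop where
  zero_mem : ∀ ⦃Z : C⦄, IsZero Z → Z ∈ A
  iso_mem : ∀ ⦃X Y : C⦄, (X ≅ Y) → X ∈ A → Y ∈ A
  shift_mem : ∀ ⦃X : C⦄ (n : ℤ), X ∈ A → (X⟦n⟧ : C) ∈ A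
  cone_mem : ∀ T : Triangle C, (T ∈ distTriang C) → T.obj₁ ∈ A → T.obj₂ ∈ A → T.obj₃ ∈ A

/-- A full triangulated subcategory is admissible if it moreover has the two adjoints. -/
def IsAdmissible (A : Set C) : Prop :=
  IsTriangSub A ∧ IsAdmissibleSub A

/-- The smallest full triangulated subcategory containing a given set of objects. -/
def generated (S : Set C) : Set C :=
  ⋂₀ {P : Set C | IsTriangSub P ∧ S ⊆ P}

/-- A semiorthogonal sequence of subcategories: no nonzero morphisms from later to
earlier ones. -/
def Semiorthogonal {n : ℕ} (A : Fin n → Set C) : Prop :=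
  ∀ ⦃l k : Fin n⦄, l < k → HomOrth (A k) (A l)

/-- `t` admits a filtration `0 = t_n → t_{n-1} → ⋯ → t_0 = t` whose successive cones lie
in the prescribed subcategories. -/
def HasFiltration {n : ℕ} (A : Fin n → Set C) (t : C) : Prop :=
  ∃ (F : Fin (n + 1) → C) (f : ∀ j : Fin n, F j.succ ⟶ F j.castSucc),
    IsZero (F (Fin.last n)) ∧ F 0 = t ∧
      ∀ j : Fin n, ∃ (a : C) (g : F j.castSucc ⟶ a) (h : a ⟶ (F j.succ)⟦(1 : ℤ)⟧),
        (Triangle.mk (f j) g h ∈ distTriang C) ∧ a ∈ A j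

/-- A semiorthogonal decomposition of (the bounded derived category) `C`. -/
structure IsSOD {n : ℕ} (A : Fin n → Set C) : Prop where
  triangSub : ∀ j, IsTriangSub (A j)
  semiorth : Semiorthogonal A
  filt : ∀ t : C, HasFiltration A t

/-- A semiorthogonal decomposition of a full triangulated subcategory `D` of `C`. -/
structure IsSODWithin (D : Set C) {n : ℕ} (A : Fin n → Set C) : Prop where
  subset : ∀ j, A j ⊆ D
  triangSub : ∀ j, IsTriangSub (A j)
  semiorth : Semiorthogonal A
  filt : ∀ t ∈ D, HasFiltration A t

/-- The `n`-th power of an autoequivalence, applied to an object. -/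
def twistFun (τ : C ≌ C) : ℤ → C → C
  | Int.ofNat m => (fun X : C => τ.functor.obj X)^[m]
  | Int.negSucc m => (fun X : C => τ.inverse.obj X)^[m + 1]

/-- The twist `S(n) = τⁿ(S)` of a set of objects (as an essential image). -/
def twistSet (τ : C ≌ C) (n : ℤ) (S : Set C) : Set C :=
  essImageSet (twistFun τ n) S

/-- A Lefschetz decomposition of `C` of length `i` with respect to the autoequivalence `τ`:
`C = ⟨A 0, (A 1)(1), …, (A (i-1))(i-1)⟩` with `A 0 ⊇ A 1 ⊇ ⋯ ⊇ A (i-1)` admissible. -/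
structure IsLefschetz (τ : C ≌ C) (i : ℕ) (A : ℕ → Set C) : Prop where
  pos : 0 < i
  desc : ∀ m : ℕ, m + 1 < i → A (m + 1) ⊆ A m
  adm : ∀ m : ℕ, m < i → IsAdmissible (A m)
  sod : IsSOD (fun j : Fin i => twistSet τ ((j : ℕ) : ℤ) (A (j : ℕ)))

/-- The primitive component `𝔞_k`, the right orthogonal of `A (k+1)` inside `A k`. -/
def primComp (A : ℕ → Set C) (m : ℕ) : Set C :=
  A m ∩ rightOrth (A (m + 1))

/-- Composition of a finite family of endofunctors: `compFam L = L 0 ∘ L 1 ∘ ⋯ ∘ L (m-1)`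
(so `L (m-1)` is applied first). -/
def compFam : ∀ {m : ℕ}, (Fin m → (C ⥤ C)) → (C ⥤ C)
  | 0, _ => 𝟭 C
  | _ + 1, L => compFam (fun j => L j.succ) ⋙ L 0

end Triang

section Serre

/-- A Serre functor on the `k`-linear triangulated category `C`: a `k`-linear exact
autoequivalence `S` together with pairings exhibiting `Hom(X, Y) ≅ Hom(Y, S X)^*`
naturally in both variables. -/
structure SerreData (k : Type w) [Field k] (C : Type u) [Category.{v} C] [Preadditive C]
    [CategoryTheory.Linear k C] [HasZeroObject C] [HasShift C ℤ]
    [∀ n : ℤ, (shiftFunctor C n).Additive] [Pretriangulated C] where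
  S : C ≌ C
  additive : S.functor.Additive
  linear : letI := additive; S.functor.Linear k
  commShift : S.functor.CommShift ℤ
  triangulated : letI := commShift; S.functor.IsTriangulated
  pairing : ∀ X Y : C, (X ⟶ Y) →ₗ[k] Module.Dual k (Y ⟶ S.functor.obj X)
  pairing_bijective : ∀ X Y : C, Function.Bijective (pairing X Y)
  pairing_nat_left : ∀ ⦃X' X Y : C⦄ (a : X' ⟶ X) (φ : X ⟶ Y) (ψ : Y ⟶ S.functor.obj X'),
    pairing X' Y (a ≫ φ) ψ = pairing X Y φ (ψ ≫ S.functor.map a)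
  pairing_nat_right : ∀ ⦃X Y Y' : C⦄ (b : Y ⟶ Y') (φ : X ⟶ Y) (ψ : Y' ⟶ S.functor.obj X),
    pairing X Y' (φ ≫ b) ψ = pairing X Y φ (b ≫ ψ)

end Serre

section Orthogonal

variable [Preadditive C] {A : Set C}

lemma mem_rightOrth_of_iso {X Y : C} (e : X ≅ Y) (hX : X ∈ rightOrth A) : Y ∈ rightOrth A :=
  fun _ ha f => by rw [← cancel_mono e.inv, zero_comp]; exact hX ha _

lemma mem_leftOrth_of_iso {X Y : C} (e : X ≅ Y) (hX : X ∈ leftOrth A) : Y ∈ leftOrth A :=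
  fun _ ha f => by rw [← cancel_epi e.hom, comp_zero]; exact hX ha _

lemma rightOrth_eq_rightOrthogonal (A : Set C) :
    rightOrth A = {Y | ObjectProperty.rightOrthogonal (· ∈ A) Y} :=
  Set.ext fun _ => ⟨fun h _ f hX => h hX f, fun h _ hX f => h f hX⟩

lemma leftOrth_eq_leftOrthogonal (A : Set C) :
    leftOrth A = {X | ObjectProperty.leftOrthogonal (· ∈ A) X} :=
  Set.ext fun _ => ⟨fun h _ f hY => h hY f, fun h _ hY f => h f hY⟩

end Orthogonal

section Triangulated

variable [HasZeroObject C] [Preadditive C] [HasShift C ℤ]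
  [∀ n : ℤ, (shiftFunctor C n).Additive] [Pretriangulated C] {A : Set C}

lemma isTriangSub_setOf (P : ObjectProperty C) [P.IsTriangulated]
    [P.IsClosedUnderIsomorphisms] : IsTriangSub {X | P X} where
  zero_mem _ hZ := P.prop_of_isZero hZ
  iso_mem _ _ e hX := P.prop_of_iso e hX
  shift_mem _ n hX := P.le_shift n _ hX
  cone_mem T hT h₁ h₂ := P.ext_of_isTriangulatedClosed₃ T hT h₁ h₂

lemma IsTriangSub.isStableUnderShift (hA : IsTriangSub A) :
    ObjectProperty.IsStableUnderShift (C := C) (· ∈ A) ℤ where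
  isStableUnderShiftBy n := ⟨fun _ hX => hA.shift_mem n hX⟩

lemma isTriangSub_rightOrth (hA : IsTriangSub A) : IsTriangSub (rightOrth A) := by
  have := hA.isStableUnderShift
  rw [rightOrth_eq_rightOrthogonal]
  exact isTriangSub_setOf _

lemma isTriangSub_leftOrth (hA : IsTriangSub A) : IsTriangSub (leftOrth A) := by
  have := hA.isStableUnderShift
  rw [leftOrth_eq_leftOrthogonal]
  exact isTriangSub_setOf _

end Triangulated

section Decomposition

open ZeroObject

variable [HasZeroObject C] [Preadditive C] [HasShift C ℤ]
  [∀ n : ℤ, (shiftFunctor C n).Additive] [Pretriangulated C]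

/-- The argument order follows `IsSOD ![P, Q]`: the first vertex lies in `Q`, the cone in `P`. -/
def HasDecomposition (P Q : Set C) (t : C) : Prop :=
  ∃ (x z : C) (u : x ⟶ t) (v : t ⟶ z) (w : z ⟶ x⟦(1 : ℤ)⟧),
    Triangle.mk u v w ∈ distTriang C ∧ x ∈ Q ∧ z ∈ P

lemma HasDecomposition.hasFiltration {P Q : Set C} {t : C} (h : HasDecomposition P Q t) :
    HasFiltration ![P, Q] t := by
  obtain ⟨x, z, u, v, w, hT, hx, hz⟩ := h
  refine ⟨![t, x, 0], Fin.cons u (Fin.cons (0 : (0 : C) ⟶ x) (fun i => i.elim0)),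
    isZero_zero C, rfl, ?_⟩
  intro j
  match j with
  | 0 => exact ⟨z, v, w, hT, hz⟩
  | 1 => exact ⟨x, 𝟙 x, 0, contractible_distinguished₁ x, hx⟩

lemma isSOD_pair {P Q : Set C} (hP : IsTriangSub P) (hQ : IsTriangSub Q) (horth : HomOrth Q P)
    (h : ∀ t, HasDecomposition P Q t) : IsSOD ![P, Q] where
  triangSub
    | 0 => hP
    | 1 => hQ
  semiorth l k hlk := by
    fin_cases l <;> fin_cases k <;> first | exact horth | exact absurd hlk (by decide)
  filt t := (h t).hasFiltration

namespace IsSOD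

variable {A B : Set C}

lemma homOrth (h : IsSOD ![A, B]) : HomOrth B A := h.semiorth (l := 0) (k := 1) Fin.zero_lt_one

lemma hasDecomposition (h : IsSOD ![A, B]) (t : C) : HasDecomposition A B t := by
  obtain ⟨F, f, hlast, rfl, hcone⟩ := h.filt t
  obtain ⟨z, v, w, hT₀, hz⟩ := hcone 0
  obtain ⟨b, g, _, hT₁, hb⟩ := hcone 1
  have : IsIso g := (Triangle.isZero₁_iff_isIso₂ _ hT₁).1 hlast
  exact ⟨F 1, z, f 0, v, w, hT₀, (h.triangSub 1).iso_mem (asIso g).symm hb, hz⟩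

lemma eq_leftOrth (h : IsSOD ![A, B]) : B = leftOrth A := by
  refine Set.Subset.antisymm (fun b hb a ha f => h.homOrth hb ha f) fun t ht => ?_
  obtain ⟨x, z, u, v, w, hT, hx, hz⟩ := h.hasDecomposition t
  -- `𝟙 z` factors through `x⟦1⟧ ∈ B` because `v = 0`, hence `z = 0` and `u` is an isomorphism
  obtain ⟨g, hg⟩ := Triangle.yoneda_exact₃ _ hT (𝟙 z) ((comp_id v).trans (ht hz v))
  have hz0 : IsZero z := by
    rw [IsZero.iff_id_eq_zero, hg, h.homOrth ((h.triangSub 1).shift_mem 1 hx) hz g]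
    exact comp_zero
  have : IsIso u := (Triangle.isZero₃_iff_isIso₁ _ hT).1 hz0
  exact (h.triangSub 1).iso_mem (asIso u) hx

lemma eq_rightOrth (h : IsSOD ![A, B]) : A = rightOrth B := by
  refine Set.Subset.antisymm (fun a ha b hb f => h.homOrth hb ha f) fun t ht => ?_
  obtain ⟨x, z, u, v, w, hT, hx, hz⟩ := h.hasDecomposition t
  -- dually, `𝟙 x` factors through `z⟦-1⟧ ∈ A` because `u = 0`
  obtain ⟨g, hg⟩ := Triangle.coyoneda_exact₂ _ (inv_rot_of_distTriang _ hT) (𝟙 x)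
    ((id_comp u).trans (ht hx u))
  have hx0 : IsZero x := by
    rw [IsZero.iff_id_eq_zero, hg, h.homOrth hx ((h.triangSub 0).shift_mem (-1) hz) g]
    exact zero_comp
  have : IsIso v := (Triangle.isZero₁_iff_isIso₂ _ hT).1 hx0
  exact (h.triangSub 0).iso_mem (asIso v).symm hz

end IsSOD

lemma HasDecomposition.of_equivalence (E : C ≌ C) [E.functor.CommShift ℤ]
    [E.functor.IsTriangulated] {P Q : Set C} (hP : ∀ ⦃X Y : C⦄, (X ≅ Y) → X ∈ P → Y ∈ P)
    {t : C} (h : HasDecomposition P Q (E.functor.obj t)) :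
    HasDecomposition {X | E.functor.obj X ∈ P} (essImageSet E.inverse.obj Q) t := by
  obtain ⟨q, p, f, g, k, hT, hq, hp⟩ := h
  let u : E.inverse.obj q ⟶ t := E.functor.preimage (E.counitIso.hom.app q ≫ f)
  obtain ⟨z, v, w, hT'⟩ := distinguished_cocone_triangle u
  have hu : E.functor.map u = E.counitIso.hom.app q ≫ f := E.functor.map_preimage _
  obtain ⟨e, -⟩ := exists_iso_of_arrow_iso _ _ (E.functor.map_distinguished _ hT') hT
    (Arrow.isoMk (E.counitIso.app q) (Iso.refl _) (hu.symm.trans (comp_id _).symm))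
  exact ⟨_, z, u, v, w, hT', ⟨q, hq, ⟨Iso.refl _⟩⟩, hP (Triangle.π₃.mapIso e).symm hp⟩

end Decomposition

lemma bijective_comp_counit_of_fullyFaithful {D : Type*} [Category D] {F : D ⥤ C} {G : C ⥤ D}
    (adj : F ⊣ G) (hF : F.FullyFaithful) (X : D) (Y : C) :
    Function.Bijective (fun p : F.obj X ⟶ F.obj (G.obj Y) => p ≫ adj.counit.app Y) := by
  have : (fun p : F.obj X ⟶ F.obj (G.obj Y) => p ≫ adj.counit.app Y) =
      (adj.homEquiv X Y).symm ∘ hF.preimage := by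
    funext p
    simp [Adjunction.homEquiv_counit]
  rw [this]
  exact (adj.homEquiv X Y).symm.bijective.comp hF.homEquiv.symm.bijective

section Shift

variable [Preadditive C] [HasShift C ℤ] [∀ n : ℤ, (shiftFunctor C n).Additive]

lemma eq_zero_of_comp_shift_map_eq_zero {c X Y : C} (u : X ⟶ Y)
    (hu : ∀ g : c⟦(-1 : ℤ)⟧ ⟶ X, g ≫ u = 0 → g = 0) (ψ : c ⟶ X⟦(1 : ℤ)⟧)
    (hψ : ψ ≫ u⟦(1 : ℤ)⟧' = 0) : ψ = 0 := by
  let e := (shiftFunctorCompIsoId C (-1 : ℤ) 1 (by norm_num)).app c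
  let g := (shiftFunctor C (1 : ℤ)).preimage (e.hom ≫ ψ)
  have hg : g ≫ u = 0 := by
    rw [← Functor.map_eq_zero_iff (shiftFunctor C (1 : ℤ)), Functor.map_comp,
      Functor.map_preimage, assoc, hψ, comp_zero]
  rw [← cancel_epi e.hom, comp_zero, ← (shiftFunctor C (1 : ℤ)).map_preimage (e.hom ≫ ψ)]
  change (shiftFunctor C (1 : ℤ)).map g = 0
  rw [hu g hg, Functor.map_zero]

end Shift

section AdjointDecomposition

variable [HasZeroObject C] [Preadditive C] [HasShift C ℤ]
  [∀ n : ℤ, (shiftFunctor C n).Additive] [Pretriangulated C] {A : Set C}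

lemma mem_rightOrth_of_bijective_comp_mor₁ (hA : ∀ ⦃c : C⦄, c ∈ A → c⟦(-1 : ℤ)⟧ ∈ A)
    (T : Triangle C) (hT : T ∈ distTriang C)
    (hbij : ∀ ⦃c : C⦄, c ∈ A → Function.Bijective (fun φ : c ⟶ T.obj₁ => φ ≫ T.mor₁)) :
    T.obj₃ ∈ rightOrth A := by
  intro c hc φ
  have hφ : φ ≫ T.mor₃ = 0 :=
    eq_zero_of_comp_shift_map_eq_zero T.mor₁
      (fun g hg => (hbij (hA hc)).1 (hg.trans zero_comp.symm)) _
      (by rw [assoc, comp_distTriang_mor_zero₃₁ _ hT, comp_zero])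
  obtain ⟨g, rfl⟩ := Triangle.coyoneda_exact₃ T hT φ hφ
  obtain ⟨f, rfl⟩ := (hbij hc).2 g
  simp [comp_distTriang_mor_zero₁₂ _ hT]

lemma hasDecomposition_rightOrth (hA : IsTriangSub A)
    (hι : (ObjectProperty.ι (C := C) (· ∈ A)).IsLeftAdjoint) (t : C) :
    HasDecomposition (rightOrth A) A t := by
  obtain ⟨R, ⟨adj⟩⟩ := hι.exists_rightAdjoint
  obtain ⟨z, v, w, hT⟩ := distinguished_cocone_triangle (adj.counit.app t)
  refine ⟨_, z, _, v, w, hT, (R.obj t).property, ?_⟩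
  exact mem_rightOrth_of_bijective_comp_mor₁ (fun c hc => hA.shift_mem (-1) hc) _ hT
    fun c hc => bijective_comp_counit_of_fullyFaithful adj (ObjectProperty.fullyFaithfulι _)
      ⟨c, hc⟩ t

lemma isSOD_rightOrth (hA : IsTriangSub A)
    (hι : (ObjectProperty.ι (C := C) (· ∈ A)).IsLeftAdjoint) :
    IsSOD ![rightOrth A, A] :=
  isSOD_pair (isTriangSub_rightOrth hA) hA (fun _ hX _ hY f => hY hX f)
    (hasDecomposition_rightOrth hA hι)

end AdjointDecomposition

section Serre

variable [HasZeroObject C] [Preadditive C] [HasShift C ℤ]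
  [∀ n : ℤ, (shiftFunctor C n).Additive] [Pretriangulated C]

namespace SerreData

variable {k : Type w} [Field k] [CategoryTheory.Linear k C] (SD : SerreData k C)

lemma functor_mem_rightOrth_iff (A : Set C) (X : C) :
    SD.S.functor.obj X ∈ rightOrth A ↔ X ∈ leftOrth A := by
  constructor
  · intro h a ha f
    apply (SD.pairing_bijective X a).1
    ext ψ
    simp [h ha ψ]
  · intro h a ha ψ
    rw [← Module.forall_dual_apply_eq_zero_iff k]
    intro φ
    obtain ⟨f, rfl⟩ := (SD.pairing_bijective X a).2 φ
    simp [h ha f]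

lemma setOf_functor_mem_rightOrth (A : Set C) :
    {X | SD.S.functor.obj X ∈ rightOrth A} = leftOrth A :=
  Set.ext (SD.functor_mem_rightOrth_iff A)

lemma essImageSet_functor_leftOrth (A : Set C) :
    essImageSet SD.S.functor.obj (leftOrth A) = rightOrth A := by
  refine Set.Subset.antisymm ?_ fun Y hY => ?_
  · rintro Y ⟨X, hX, ⟨e⟩⟩
    exact mem_rightOrth_of_iso e ((SD.functor_mem_rightOrth_iff A X).2 hX)
  · refine ⟨SD.S.inverse.obj Y, ?_, ⟨SD.S.counitIso.app Y⟩⟩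
    exact (SD.functor_mem_rightOrth_iff A _).1
      (mem_rightOrth_of_iso (SD.S.counitIso.app Y).symm hY)

lemma essImageSet_inverse_rightOrth (A : Set C) :
    essImageSet SD.S.inverse.obj (rightOrth A) = leftOrth A := by
  refine Set.Subset.antisymm ?_ fun X hX => ?_
  · rintro X ⟨Y, hY, ⟨e⟩⟩
    refine mem_leftOrth_of_iso e ((SD.functor_mem_rightOrth_iff A _).1 ?_)
    exact mem_rightOrth_of_iso (SD.S.counitIso.app Y).symm hY
  · exact ⟨_, (SD.functor_mem_rightOrth_iff A X).2 hX, ⟨(SD.S.unitIso.app X).symm⟩⟩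

end SerreData

end Serre

section Statements

variable [HasZeroObject C] [Preadditive C] [HasShift C ℤ]
  [∀ n : ℤ, (shiftFunctor C n).Additive] [Pretriangulated C]

theorem statement11_general (k : Type w) [Field k] [CategoryTheory.Linear k C]
    (SD : SerreData k C)
    (A : Set C) (hA : IsAdmissible A) :
    essImageSet SD.S.functor.obj (leftOrth A) = rightOrth A ∧
    essImageSet SD.S.inverse.obj (rightOrth A) = leftOrth A ∧
    ∀ B : Set C, IsSOD ![A, B] →
      B = leftOrth A ∧ A = rightOrth B ∧
        IsSOD ![essImageSet SD.S.functor.obj B, A] ∧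
        IsSOD ![B, essImageSet SD.S.inverse.obj A] := by
  obtain ⟨hAtri, -, hι⟩ := hA
  refine ⟨SD.essImageSet_functor_leftOrth A, SD.essImageSet_inverse_rightOrth A, fun B hB => ?_⟩
  have hBA : B = leftOrth A := hB.eq_leftOrth
  have hAB : A = rightOrth B := hB.eq_rightOrth
  have hSB : essImageSet SD.S.functor.obj B = rightOrth A := by
    rw [hBA]; exact SD.essImageSet_functor_leftOrth A
  have hSA : essImageSet SD.S.inverse.obj A = leftOrth B := by
    rw [hAB]; exact SD.essImageSet_inverse_rightOrth B
  have hBtri : IsTriangSub B := hBA ▸ isTriangSub_leftOrth hAtri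
  refine ⟨hBA, hAB, hSB ▸ isSOD_rightOrth hAtri hι, ?_⟩
  refine isSOD_pair hBtri (hSA ▸ isTriangSub_leftOrth hBtri)
    (hSA ▸ fun _ hX _ hY f => hX hY f) fun t => ?_
  -- `S⁻¹` carries the decomposition `⟨A^⊥, A⟩` of `S t` to one of `t`
  let _ := SD.commShift
  have _ := SD.triangulated
  have h := (hasDecomposition_rightOrth hAtri hι (SD.S.functor.obj t)).of_equivalence SD.S
    fun _ _ => mem_rightOrth_of_iso
  rwa [SD.setOf_functor_mem_rightOrth, ← hBA] at h

/-- let `S` be a Serre functor on the `k`-linear triangulated category `T`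
with finite-dimensional Hom spaces, and `A` an admissible subcategory.  Then
`S(^⊥A) = A^⊥` and `S⁻¹(A^⊥) = ^⊥A`; in particular, for any semiorthogonal decomposition
`T = ⟨A, B⟩` one has `B = ^⊥A`, `A = B^⊥`, and semiorthogonal decompositions
`T = ⟨S(B), A⟩` and `T = ⟨B, S⁻¹(A)⟩`. -/
theorem statement11 (k : Type w) [Field k] [CategoryTheory.Linear k C]
    (SD : SerreData k C) (hfd : ∀ X Y : C, FiniteDimensional k (X ⟶ Y))
    (A : Set C) (hA : IsAdmissible A) :
    essImageSet SD.S.functor.obj (leftOrth A) = rightOrth A ∧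
    essImageSet SD.S.inverse.obj (rightOrth A) = leftOrth A ∧
    ∀ B : Set C, IsSOD ![A, B] →
      B = leftOrth A ∧ A = rightOrth B ∧
        IsSOD ![essImageSet SD.S.functor.obj B, A] ∧
        IsSOD ![B, essImageSet SD.S.inverse.obj A] :=
  statement11_general k SD A hA

end Statements
end HPD
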